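/- arXiv:1311.7125 — 4 statements merged into one kernel-verified Lean document; each statement's English description precedes it below -/
import Mathlib

section
/- The category Rep_k(Q1) has RP property 1 and RP property 2 with respect to its unique Ext-nontrivial couple {M, M'}. Concretely: (RP property 1) for every exceptional representation X of Q1, if hom(M,X) = 0 and ext1(M,X) = 0 then hom(X,M') = 0 and ext1(X,M') = 0, and if hom(M',X) = 0 and ext1(M',X) = 0 then hom(X,M) = 0 and ext1(X,M) = 0. (RP property 2) for all exceptional representations X, Y of Q1: if hom(M,X) ≠ 0, hom(X,Y) ≠ 0, hom(M,Y) = 0 and ext1(M,Y) = 0, then hom(M',Y) ≠ 0; and if hom(M',X) ≠ 0, hom(X,Y) ≠ 0, hom(M',Y) = 0 and ext1(M',Y) = 0, then hom(M,Y) ≠ 0. -/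
noncomputable section

open Module

universe u

/-- A representation of the quiver `Q1` (vertices 1, 2, 3; arrows 1→3, 1→2, 2→3)
over the field `k`, with finite-dimensional vector spaces at the vertices. -/
structure RepQ1 (k : Type u) [Field k] where
  V1 : Type u
  V2 : Type u
  V3 : Type u
  [acg1 : AddCommGroup V1]
  [acg2 : AddCommGroup V2]
  [acg3 : AddCommGroup V3]
  [mod1 : Module k V1]
  [mod2 : Module k V2]
  [mod3 : Module k V3]
  [fd1 : FiniteDimensional k V1]
  [fd2 : FiniteDimensional k V2]
  [fd3 : FiniteDimensional k V3]
  r13 : V1 →ₗ[k] V3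
  r12 : V1 →ₗ[k] V2
  r23 : V2 →ₗ[k] V3

attribute [instance] RepQ1.acg1 RepQ1.acg2 RepQ1.acg3 RepQ1.mod1 RepQ1.mod2 RepQ1.mod3
  RepQ1.fd1 RepQ1.fd2 RepQ1.fd3

namespace RepQ1

variable {k : Type u} [Field k]

/-- The space of morphisms of representations `ρ → ρ'`:
triples `(f₁, f₂, f₃)` of linear maps commuting with the structure maps. -/
def homSpace (ρ ρ' : RepQ1 k) :
    Submodule k ((ρ.V1 →ₗ[k] ρ'.V1) × (ρ.V2 →ₗ[k] ρ'.V2) × (ρ.V3 →ₗ[k] ρ'.V3)) where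
  carrier := { f | f.2.2 ∘ₗ ρ.r13 = ρ'.r13 ∘ₗ f.1 ∧
                   f.2.1 ∘ₗ ρ.r12 = ρ'.r12 ∘ₗ f.1 ∧
                   f.2.2 ∘ₗ ρ.r23 = ρ'.r23 ∘ₗ f.2.1 }
  add_mem' := by
    rintro f g ⟨h1, h2, h3⟩ ⟨h1', h2', h3'⟩
    refine ⟨?_, ?_, ?_⟩ <;>
      simp only [Prod.fst_add, Prod.snd_add, LinearMap.add_comp, LinearMap.comp_add,
        h1, h2, h3, h1', h2', h3']
  zero_mem' := by
    refine ⟨?_, ?_, ?_⟩ <;> simp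
  smul_mem' := by
    rintro c f ⟨h1, h2, h3⟩
    refine ⟨?_, ?_, ?_⟩ <;>
      simp only [Prod.smul_fst, Prod.smul_snd, LinearMap.smul_comp, LinearMap.comp_smul,
        h1, h2, h3]

/-- `hom ρ ρ'` is the `k`-dimension of the space of morphisms of representations `ρ → ρ'`. -/
def hom (ρ ρ' : RepQ1 k) : ℕ := finrank k (homSpace ρ ρ')

/-- The linear map `Φ` whose cokernel computes `Ext¹(ρ, ρ')`. -/
def phi (ρ ρ' : RepQ1 k) :
    ((ρ.V1 →ₗ[k] ρ'.V1) × (ρ.V2 →ₗ[k] ρ'.V2) × (ρ.V3 →ₗ[k] ρ'.V3)) →ₗ[k]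
      ((ρ.V1 →ₗ[k] ρ'.V3) × (ρ.V1 →ₗ[k] ρ'.V2) × (ρ.V2 →ₗ[k] ρ'.V3)) where
  toFun g := (g.2.2 ∘ₗ ρ.r13 - ρ'.r13 ∘ₗ g.1,
              g.2.1 ∘ₗ ρ.r12 - ρ'.r12 ∘ₗ g.1,
              g.2.2 ∘ₗ ρ.r23 - ρ'.r23 ∘ₗ g.2.1)
  map_add' g h := by
    refine Prod.ext ?_ (Prod.ext ?_ ?_) <;>
      · simp only [Prod.fst_add, Prod.snd_add, LinearMap.add_comp, LinearMap.comp_add]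
        abel
  map_smul' c g := by
    refine Prod.ext ?_ (Prod.ext ?_ ?_) <;>
      simp [LinearMap.smul_comp, LinearMap.comp_smul, smul_sub]

/-- `ext1 ρ ρ'` is the `k`-dimension of the cokernel of `Φ`; it equals
`dim Ext¹(ρ, ρ')` in the abelian category of representations of `Q1`. -/
def ext1 (ρ ρ' : RepQ1 k) : ℕ :=
  finrank k (((ρ.V1 →ₗ[k] ρ'.V3) × (ρ.V1 →ₗ[k] ρ'.V2) × (ρ.V2 →ₗ[k] ρ'.V3)) ⧸
    LinearMap.range (phi ρ ρ'))

/-- A representation is exceptional if `hom ρ ρ = 1` and `ext1 ρ ρ = 0`. -/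
def IsExceptional (ρ : RepQ1 k) : Prop := hom ρ ρ = 1 ∧ ext1 ρ ρ = 0

/-- Isomorphism of representations of `Q1`. -/
def Iso (ρ ρ' : RepQ1 k) : Prop :=
  ∃ (e1 : ρ.V1 ≃ₗ[k] ρ'.V1) (e2 : ρ.V2 ≃ₗ[k] ρ'.V2) (e3 : ρ.V3 ≃ₗ[k] ρ'.V3),
    e3.toLinearMap ∘ₗ ρ.r13 = ρ'.r13 ∘ₗ e1.toLinearMap ∧
    e2.toLinearMap ∘ₗ ρ.r12 = ρ'.r12 ∘ₗ e1.toLinearMap ∧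
    e3.toLinearMap ∘ₗ ρ.r23 = ρ'.r23 ∘ₗ e2.toLinearMap

end RepQ1

variable (k : Type u) [Field k]

/-- `π₊^m : k^{m+1} → k^m`, `(a₁,…,a_{m+1}) ↦ (a₁,…,a_m)`. -/
def piPlus (m : ℕ) : (Fin (m + 1) → k) →ₗ[k] (Fin m → k) :=
  LinearMap.funLeft k k Fin.castSucc

/-- `π₋^m : k^{m+1} → k^m`, `(a₁,…,a_{m+1}) ↦ (a₂,…,a_{m+1})`. -/
def piMinus (m : ℕ) : (Fin (m + 1) → k) →ₗ[k] (Fin m → k) :=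
  LinearMap.funLeft k k Fin.succ

/-- `j₊^m : k^m → k^{m+1}`, `(a₁,…,a_m) ↦ (a₁,…,a_m,0)`. -/
def jPlus (m : ℕ) : (Fin m → k) →ₗ[k] (Fin (m + 1) → k) where
  toFun a := Fin.snoc a 0
  map_add' a b := by
    ext i
    induction i using Fin.lastCases <;> simp
  map_smul' c a := by
    ext i
    induction i using Fin.lastCases <;> simp

/-- `j₋^m : k^m → k^{m+1}`, `(a₁,…,a_m) ↦ (0,a₁,…,a_m)`. -/
def jMinus (m : ℕ) : (Fin m → k) →ₗ[k] (Fin (m + 1) → k) where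
  toFun a := Fin.cons 0 a
  map_add' a b := by
    ext i
    induction i using Fin.cases <;> simp
  map_smul' c a := by
    ext i
    induction i using Fin.cases <;> simp

/-- The representation `E₁^m = (k^{m+1}, k^m, k^m)` with `ρ₁₃ = π₊^m`, `ρ₁₂ = π₋^m`, `ρ₂₃ = id`. -/
def E1 (m : ℕ) : RepQ1 k where
  V1 := Fin (m + 1) → k
  V2 := Fin m → k
  V3 := Fin m → k
  r13 := piPlus k m
  r12 := piMinus k m
  r23 := LinearMap.id

/-- The representation `E₂^m = (k^m, k^{m+1}, k^{m+1})` with `ρ₁₃ = j₊^m`, `ρ₁₂ = j₋^m`, `ρ₂₃ = id`. -/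
def E2 (m : ℕ) : RepQ1 k where
  V1 := Fin m → k
  V2 := Fin (m + 1) → k
  V3 := Fin (m + 1) → k
  r13 := jPlus k m
  r12 := jMinus k m
  r23 := LinearMap.id

/-- The representation `E₃^m = (k^m, k^m, k^{m+1})` with `ρ₁₃ = j₊^m`, `ρ₁₂ = id`, `ρ₂₃ = j₋^m`. -/
def E3 (m : ℕ) : RepQ1 k where
  V1 := Fin m → k
  V2 := Fin m → k
  V3 := Fin (m + 1) → k
  r13 := jPlus k m
  r12 := LinearMap.id
  r23 := jMinus k m

/-- The representation `E₄^m = (k^{m+1}, k^{m+1}, k^m)` with `ρ₁₃ = π₊^m`, `ρ₁₂ = id`, `ρ₂₃ = π₋^m`. -/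
def E4 (m : ℕ) : RepQ1 k where
  V1 := Fin (m + 1) → k
  V2 := Fin (m + 1) → k
  V3 := Fin m → k
  r13 := piPlus k m
  r12 := LinearMap.id
  r23 := piMinus k m

/-- The representation `M = (0, k, 0)` with zero structure maps. -/
def Mrep : RepQ1 k where
  V1 := Fin 0 → k
  V2 := Fin 1 → k
  V3 := Fin 0 → k
  r13 := 0
  r12 := 0
  r23 := 0

/-- The representation `M' = (k, 0, k)` with `ρ₁₃ = id` and the other structure maps zero. -/
def Mprep : RepQ1 k where
  V1 := Fin 1 → k
  V2 := Fin 0 → k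
  V3 := Fin 1 → k
  r13 := LinearMap.id
  r12 := 0
  r23 := 0

namespace RepQ1

variable {k : Type u} [Field k]

/-- An exceptional pair `(X, Y)`: both `X` and `Y` are exceptional and
`hom (Y, X) = 0` and `ext1 (Y, X) = 0`. -/
def IsExceptionalPair (X Y : RepQ1 k) : Prop :=
  X.IsExceptional ∧ Y.IsExceptional ∧ hom Y X = 0 ∧ ext1 Y X = 0

/-- An exceptional triple `(A, B, C)`: `(A,B)`, `(B,C)` and `(A,C)` are exceptional pairs. -/
def IsExceptionalTriple (A B C : RepQ1 k) : Prop :=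
  IsExceptionalPair A B ∧ IsExceptionalPair B C ∧ IsExceptionalPair A C

/-- A morphism of representations of `Q1`. -/
structure Homo (ρ ρ' : RepQ1 k) where
  f1 : ρ.V1 →ₗ[k] ρ'.V1
  f2 : ρ.V2 →ₗ[k] ρ'.V2
  f3 : ρ.V3 →ₗ[k] ρ'.V3
  comm13 : f3 ∘ₗ ρ.r13 = ρ'.r13 ∘ₗ f1
  comm12 : f2 ∘ₗ ρ.r12 = ρ'.r12 ∘ₗ f1
  comm23 : f3 ∘ₗ ρ.r23 = ρ'.r23 ∘ₗ f2

/-- `0 → A → C → B → 0` is a short exact sequence of representations of `Q1`: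
at each vertex the induced sequence of vector spaces is short exact. -/
def IsSES {A C B : RepQ1 k} (f : Homo A C) (g : Homo C B) : Prop :=
  Function.Injective f.f1 ∧ Function.Injective f.f2 ∧ Function.Injective f.f3 ∧
  Function.Surjective g.f1 ∧ Function.Surjective g.f2 ∧ Function.Surjective g.f3 ∧
  LinearMap.range f.f1 = LinearMap.ker g.f1 ∧
  LinearMap.range f.f2 = LinearMap.ker g.f2 ∧
  LinearMap.range f.f3 = LinearMap.ker g.f3

/-- A representation is zero when all its vector spaces are zero. -/
def IsZeroRep (ρ : RepQ1 k) : Prop :=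
  Subsingleton ρ.V1 ∧ Subsingleton ρ.V2 ∧ Subsingleton ρ.V3

end RepQ1

/-- The (vertexwise) direct sum of two representations of `Q1`. -/
def RepQ1.dsum {k : Type u} [Field k] (ρ σ : RepQ1 k) : RepQ1 k where
  V1 := ρ.V1 × σ.V1
  V2 := ρ.V2 × σ.V2
  V3 := ρ.V3 × σ.V3
  r13 := ρ.r13.prodMap σ.r13
  r12 := ρ.r12.prodMap σ.r12
  r23 := ρ.r23.prodMap σ.r23

/-!
Testing against `M` and `M'` reads off the arrows `ρ₂₃` and `ρ₁₂`: `hom(M, X) = 0` iff `ρ₂₃` is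
injective, `ext¹(M, X) = 0` forces `ρ₂₃` to be surjective, and then `hom(X, M') = ext¹(X, M') = 0`;
dually for `M'` and `ρ₁₂`. This is RP property 1.

For RP property 2, let `Y` be exceptional with `ρ₁₂`, `ρ₂₃` injective and one of them bijective.
The Euler form gives `dim Y₃ = dim Y₁ + 1`, and `End Y = k` then forces every map
`ρ₁₃ - μ ρ₂₃ρ₁₂` of the Kronecker pencil of `Y` to be injective. An exceptional `X` with
`ker ρ₂₃ ≠ 0`, or with `ker ρ₁₂ ≠ 0` and `X₂ ≠ 0`, has `ρ₂₃ρ₁₂` surjective, so the image `U` of a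
morphism `X → Y` at vertex 1 satisfies `ρ₁₃ U ⊆ ρ₂₃ρ₁₂ U`. Over an algebraically closed field
`(ρ₂₃ρ₁₂)⁻¹ρ₁₃` then has an eigenvector in `U` unless `U = 0`, which the pencil forbids; hence
`hom(X, Y) = 0`. When `X₂ = 0` the arrow `ρ₁₃` of `X` is surjective and the morphism vanishes
directly.
-/

section LinearAlgebra

open Function LinearMap

variable {K V W : Type*} [Field K] [AddCommGroup V] [Module K V] [AddCommGroup W] [Module K W]

theorem LinearMap.not_injective_zero [Nontrivial V] : ¬ Injective (0 : V →ₗ[K] W) := by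
  obtain ⟨x, hx⟩ := exists_ne (0 : V)
  exact fun h => hx (h rfl)

theorem LinearMap.exists_ne_zero_forall_apply_eq_zero {f : V →ₗ[K] W} (hf : ¬ Surjective f) :
    ∃ χ : W →ₗ[K] K, χ ≠ 0 ∧ ∀ x, χ (f x) = 0 := by
  obtain ⟨χ, hχ, hle⟩ := (range f).exists_le_ker_of_lt_top
    (lt_top_iff_ne_top.2 (mt range_eq_top.1 hf))
  exact ⟨χ, hχ, fun x => hle (mem_range_self f x)⟩

theorem Submodule.eq_bot_of_map_le_map [IsAlgClosed K] [FiniteDimensional K V]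
    {c d : V →ₗ[K] W} (hd : Injective d) (hcd : ∀ μ : K, Injective (c - μ • d))
    {U : Submodule K V} (hU : U.map c ≤ U.map d) : U = ⊥ := by
  by_contra hU0
  have : Nontrivial U := Submodule.nontrivial_iff_ne_bot.2 hU0
  let e := Submodule.equivMapOfInjective d hd U
  let θ : Module.End K U :=
    e.symm.toLinearMap ∘ₗ c.restrict fun x hx => hU (Submodule.mem_map_of_mem hx)
  obtain ⟨μ, hμ⟩ := Module.End.exists_eigenvalue θ
  obtain ⟨w, hw⟩ := hμ.exists_hasEigenvector
  have hcw : c w = μ • d w := by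
    simpa [θ, e] using congrArg (fun x => (e x : W)) hw.apply_eq_smul
  exact hw.2 (Subtype.ext (hcd μ (by simp [hcw])))

end LinearAlgebra

namespace RepQ1

open Function LinearMap

variable {k : Type u} [Field k]

def r123 (ρ : RepQ1 k) : ρ.V1 →ₗ[k] ρ.V3 := ρ.r23 ∘ₗ ρ.r12

@[simp]
theorem r123_apply (ρ : RepQ1 k) (x : ρ.V1) : ρ.r123 x = ρ.r23 (ρ.r12 x) := rfl

theorem phi_apply (ρ ρ' : RepQ1 k)
    (g : (ρ.V1 →ₗ[k] ρ'.V1) × (ρ.V2 →ₗ[k] ρ'.V2) × (ρ.V3 →ₗ[k] ρ'.V3)) :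
    phi ρ ρ' g = (g.2.2 ∘ₗ ρ.r13 - ρ'.r13 ∘ₗ g.1, g.2.1 ∘ₗ ρ.r12 - ρ'.r12 ∘ₗ g.1,
      g.2.2 ∘ₗ ρ.r23 - ρ'.r23 ∘ₗ g.2.1) := rfl

theorem hom_eq_zero_iff {ρ ρ' : RepQ1 k} : hom ρ ρ' = 0 ↔ ∀ f ∈ homSpace ρ ρ', f = 0 := by
  rw [hom, Submodule.finrank_eq_zero, Submodule.eq_bot_iff]

theorem ext1_eq_zero_iff {ρ ρ' : RepQ1 k} : ext1 ρ ρ' = 0 ↔ Surjective (phi ρ ρ') := by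
  rw [ext1, Module.finrank_zero_iff, Submodule.Quotient.subsingleton_iff, range_eq_top]

theorem euler_form (ρ ρ' : RepQ1 k) :
    hom ρ ρ' + (finrank k ρ.V1 * finrank k ρ'.V3 + finrank k ρ.V1 * finrank k ρ'.V2
      + finrank k ρ.V2 * finrank k ρ'.V3)
    = ext1 ρ ρ' + (finrank k ρ.V1 * finrank k ρ'.V1 + finrank k ρ.V2 * finrank k ρ'.V2
      + finrank k ρ.V3 * finrank k ρ'.V3) := by
  have hker : homSpace ρ ρ' = ker (phi ρ ρ') := by
    ext f
    simp [homSpace, phi, sub_eq_zero]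
  have hrank := finrank_range_add_finrank_ker (phi ρ ρ')
  have hquot := Submodule.finrank_quotient_add_finrank (range (phi ρ ρ'))
  simp only [Module.finrank_prod, Module.finrank_linearMap] at hrank hquot
  rw [hom, ext1, hker]
  linarith

theorem one_mem_homSpace (X : RepQ1 k) :
    (1 : (X.V1 →ₗ[k] X.V1) × (X.V2 →ₗ[k] X.V2) × (X.V3 →ₗ[k] X.V3)) ∈ homSpace X X := by
  refine ⟨?_, ?_, ?_⟩ <;> simp [Module.End.one_eq_id]

theorem eq_zero_of_hom_self_eq_one {X : RepQ1 k} (hX : hom X X = 1)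
    {f : (X.V1 →ₗ[k] X.V1) × (X.V2 →ₗ[k] X.V2) × (X.V3 →ₗ[k] X.V3)} (hf : f ∈ homSpace X X)
    (hf' : ¬ Injective f.1 ∨ ¬ Injective f.2.1 ∨ ¬ Injective f.2.2) : f = 0 := by
  suffices ∃ c : k, f = c • 1 by
    obtain ⟨c, rfl⟩ := this
    rcases eq_or_ne c 0 with rfl | hc
    · exact zero_smul k _
    · rcases hf' with h | h | h <;> exact absurd (smul_right_injective _ hc) h
  have hne : (⟨1, one_mem_homSpace X⟩ : homSpace X X) ≠ 0 := by
    rw [ne_eq, Submodule.mk_eq_zero]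
    intro h0
    obtain ⟨h1, h2, h3⟩ : (1 : Module.End k X.V1) = 0 ∧ (1 : Module.End k X.V2) = 0 ∧
        (1 : Module.End k X.V3) = 0 := by simpa [Prod.ext_iff] using h0
    rcases hf' with h | h | h <;> refine h fun x y _ => ?_
    · simpa using (LinearMap.congr_fun h1 x).trans (LinearMap.congr_fun h1 y).symm
    · simpa using (LinearMap.congr_fun h2 x).trans (LinearMap.congr_fun h2 y).symm
    · simpa using (LinearMap.congr_fun h3 x).trans (LinearMap.congr_fun h3 y).symm
  obtain ⟨c, hc⟩ := (finrank_eq_one_iff_of_nonzero' _ hne).1 hX ⟨f, hf⟩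
  exact ⟨c, (congrArg Subtype.val hc).symm⟩

theorem surjective_r12_of_surjective_phi {ρ ρ' : RepQ1 k} (h : Surjective (phi ρ ρ'))
    {u : ρ.V1} (hu : u ≠ 0) (hu12 : ρ.r12 u = 0) : Surjective ρ'.r12 := by
  obtain ⟨π, hπ⟩ := Module.Projective.exists_dual_eq_one k hu
  intro w
  obtain ⟨g, hg⟩ := h (0, π.smulRight w, 0)
  have hgu := congrArg (fun t => t.2.1 u) hg
  simp only [phi_apply, LinearMap.sub_apply, LinearMap.comp_apply, hu12, map_zero, zero_sub,
    smulRight_apply, hπ, one_smul] at hgu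
  exact ⟨-g.1 u, by rw [map_neg, hgu]⟩

theorem surjective_r23_of_surjective_phi {ρ ρ' : RepQ1 k} (h : Surjective (phi ρ ρ'))
    {v : ρ.V2} (hv : v ≠ 0) (hv23 : ρ.r23 v = 0) : Surjective ρ'.r23 := by
  obtain ⟨π, hπ⟩ := Module.Projective.exists_dual_eq_one k hv
  intro w
  obtain ⟨g, hg⟩ := h (0, 0, π.smulRight w)
  have hgv := congrArg (fun t => t.2.2 v) hg
  simp only [phi_apply, LinearMap.sub_apply, LinearMap.comp_apply, hv23, map_zero, zero_sub,
    smulRight_apply, hπ, one_smul] at hgv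
  exact ⟨-g.2.1 v, by rw [map_neg, hgv]⟩

instance : Subsingleton (Mrep k).V1 := inferInstanceAs (Subsingleton (Fin 0 → k))
instance : Subsingleton (Mrep k).V3 := inferInstanceAs (Subsingleton (Fin 0 → k))
instance : Subsingleton (Mprep k).V2 := inferInstanceAs (Subsingleton (Fin 0 → k))

theorem surjective_r23_of_ext1_Mrep_eq_zero {X : RepQ1 k} (h : ext1 (Mrep k) X = 0) :
    Surjective X.r23 :=
  surjective_r23_of_surjective_phi (ext1_eq_zero_iff.1 h) (v := fun _ => 1)
    (fun h1 => one_ne_zero (congrFun h1 0)) rfl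

theorem surjective_r12_of_ext1_Mprep_eq_zero {X : RepQ1 k} (h : ext1 (Mprep k) X = 0) :
    Surjective X.r12 :=
  surjective_r12_of_surjective_phi (ext1_eq_zero_iff.1 h) (u := fun _ => 1)
    (fun h1 => one_ne_zero (congrFun h1 0)) rfl

theorem hom_Mrep_eq_zero_iff (X : RepQ1 k) : hom (Mrep k) X = 0 ↔ Injective X.r23 := by
  rw [hom_eq_zero_iff, injective_iff_map_eq_zero]
  constructor
  · intro h v hv
    -- `V` is pinned so that `π` is a map out of `(Mrep k).V2`, not out of `Fin 1 → k`
    obtain ⟨π, hπ⟩ := Module.Projective.exists_dual_eq_one k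
      (V := (Mrep k).V2) (x := fun _ => 1) fun h1 => one_ne_zero (congrFun h1 0)
    have hf : ((0 : (Mrep k).V1 →ₗ[k] X.V1), π.smulRight v, (0 : (Mrep k).V3 →ₗ[k] X.V3))
        ∈ homSpace (Mrep k) X :=
      ⟨Subsingleton.elim _ _, Subsingleton.elim _ _, by ext; simp [hv]⟩
    exact (smulRight_apply_eq_zero_iff.1 (congrArg (·.2.1) (h _ hf))).resolve_left
      fun h0 => one_ne_zero (hπ.symm.trans (LinearMap.congr_fun h0 _))
  · rintro h ⟨f1, f2, f3⟩ ⟨-, -, h23⟩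
    rw [Subsingleton.elim f3 0, zero_comp] at h23
    have hf2 : f2 = 0 := ext fun x => h _ (LinearMap.congr_fun h23 x).symm
    rw [hf2, Subsingleton.elim f1 0, Subsingleton.elim f3 0]
    rfl

theorem hom_Mprep_eq_zero_iff (X : RepQ1 k) : hom (Mprep k) X = 0 ↔ Injective X.r12 := by
  rw [hom_eq_zero_iff, injective_iff_map_eq_zero]
  constructor
  · intro h u hu
    obtain ⟨π, hπ⟩ := Module.Projective.exists_dual_eq_one k
      (V := (Mprep k).V3) (x := fun _ => 1) fun h1 => one_ne_zero (congrFun h1 0)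
    have hf : ((π ∘ₗ (Mprep k).r13).smulRight u, (0 : (Mprep k).V2 →ₗ[k] X.V2),
        π.smulRight (X.r13 u)) ∈ homSpace (Mprep k) X :=
      ⟨by ext; simp, by ext; simp [hu], Subsingleton.elim _ _⟩
    exact (smulRight_apply_eq_zero_iff.1 (congrArg (·.1) (h _ hf))).resolve_left
      fun h0 => one_ne_zero <| hπ.symm.trans <|
        LinearMap.congr_fun h0 (show (Mprep k).V1 from fun _ => 1)
  · rintro h ⟨f1, f2, f3⟩ ⟨h13, h12, -⟩
    rw [Subsingleton.elim f2 0, zero_comp] at h12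
    have hf1 : f1 = 0 := ext fun x => h _ (LinearMap.congr_fun h12 x).symm
    have hf3 : f3 = 0 := by
      rw [hf1, comp_zero] at h13
      -- `(Mprep k).r13` is the identity
      exact ext fun x => LinearMap.congr_fun h13 x
    rw [hf1, Subsingleton.elim f2 0, hf3]
    rfl

theorem hom_Mprep_eq_zero_of_surjective {X : RepQ1 k} (h : Surjective X.r23) :
    hom X (Mprep k) = 0 := by
  rw [hom_eq_zero_iff]
  rintro ⟨f1, f2, f3⟩ ⟨h13, -, h23⟩
  rw [Subsingleton.elim f2 0, comp_zero] at h23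
  have hf3 : f3 = 0 := ext fun y => by
    obtain ⟨x, rfl⟩ := h y
    exact LinearMap.congr_fun h23 x
  rw [hf3, zero_comp] at h13
  have hf1 : f1 = 0 := ext fun x => (LinearMap.congr_fun h13 x).symm
  rw [hf1, Subsingleton.elim f2 0, hf3]
  rfl

theorem hom_Mrep_eq_zero_of_surjective {X : RepQ1 k} (h : Surjective X.r12) :
    hom X (Mrep k) = 0 := by
  rw [hom_eq_zero_iff]
  rintro ⟨f1, f2, f3⟩ ⟨-, h12, -⟩
  rw [Subsingleton.elim f1 0, comp_zero] at h12
  have hf2 : f2 = 0 := ext fun y => by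
    obtain ⟨x, rfl⟩ := h y
    exact LinearMap.congr_fun h12 x
  rw [hf2, Subsingleton.elim f1 0, Subsingleton.elim f3 0]
  rfl

theorem ext1_Mprep_eq_zero_of_injective {X : RepQ1 k} (h : Injective X.r23) :
    ext1 X (Mprep k) = 0 := by
  rw [ext1_eq_zero_iff]
  rintro ⟨t1, t2, t3⟩
  refine ⟨(t3 ∘ₗ X.r23.leftInverse ∘ₗ X.r13 - t1, 0, t3 ∘ₗ X.r23.leftInverse), ?_⟩
  ext x
  · exact sub_sub_cancel _ (t1 x)
  · exact Subsingleton.elim (α := (Mprep k).V2) _ _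
  · simp [phi_apply, leftInverse_apply_of_inj (ker_eq_bot.2 h)]

theorem ext1_Mrep_eq_zero_of_injective {X : RepQ1 k} (h : Injective X.r12) :
    ext1 X (Mrep k) = 0 := by
  rw [ext1_eq_zero_iff]
  rintro ⟨t1, t2, t3⟩
  refine ⟨(0, t2 ∘ₗ X.r12.leftInverse, 0), ?_⟩
  ext x
  · exact Subsingleton.elim (α := (Mrep k).V3) _ _
  · simp [phi_apply, leftInverse_apply_of_inj (ker_eq_bot.2 h)]
  · exact Subsingleton.elim (α := (Mrep k).V3) _ _

theorem surjective_r12_of_r23_apply_eq_zero {X : RepQ1 k} (hX : hom X X = 1) [Nontrivial X.V3]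
    {v : X.V2} (hv : v ≠ 0) (hv23 : X.r23 v = 0) : Surjective X.r12 := by
  by_contra hs
  obtain ⟨ξ, hξ, hξ12⟩ := exists_ne_zero_forall_apply_eq_zero hs
  have hg : ((0 : X.V1 →ₗ[k] X.V1), ξ.smulRight v, (0 : X.V3 →ₗ[k] X.V3)) ∈ homSpace X X :=
    ⟨by simp, by ext; simp [hξ12], by ext; simp [hv23]⟩
  have := congrArg (·.2.1) (eq_zero_of_hom_self_eq_one hX hg (Or.inr (Or.inr not_injective_zero)))
  exact hξ ((smulRight_apply_eq_zero_iff.1 this).resolve_right hv)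

theorem r13_apply_ne_zero_of_r12_apply_eq_zero {X : RepQ1 k} (hX : hom X X = 1)
    [Nontrivial X.V3] {u : X.V1} (hu : u ≠ 0) (hu12 : X.r12 u = 0) : X.r13 u ≠ 0 := by
  intro hu13
  obtain ⟨ξ, hξ⟩ := Module.Projective.exists_dual_ne_zero k hu
  have hg : (ξ.smulRight u, (0 : X.V2 →ₗ[k] X.V2), (0 : X.V3 →ₗ[k] X.V3)) ∈ homSpace X X :=
    ⟨by ext; simp [hu13], by ext; simp [hu12], by simp⟩
  have := congrArg (·.1) (eq_zero_of_hom_self_eq_one hX hg (Or.inr (Or.inr not_injective_zero)))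
  exact hξ (by simpa [hu] using congr($this u))

theorem surjective_r23_of_r12_apply_eq_zero {X : RepQ1 k} (hX : hom X X = 1) [Nontrivial X.V2]
    {u : X.V1} (hu12 : X.r12 u = 0) (hu13 : X.r13 u ≠ 0) : Surjective X.r23 := by
  by_contra hs
  obtain ⟨ξ, hξ, hξ23⟩ := exists_ne_zero_forall_apply_eq_zero hs
  have hg : ((ξ ∘ₗ X.r13).smulRight u, (0 : X.V2 →ₗ[k] X.V2), ξ.smulRight (X.r13 u))
      ∈ homSpace X X :=
    ⟨by ext; simp, by ext; simp [hu12], by ext; simp [hξ23]⟩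
  have := congrArg (·.2.2) (eq_zero_of_hom_self_eq_one hX hg (Or.inr (Or.inl not_injective_zero)))
  exact hξ ((smulRight_apply_eq_zero_iff.1 this).resolve_right hu13)

theorem surjective_r13_of_subsingleton_V2 {X : RepQ1 k} (hX : hom X X = 1) [Nontrivial X.V1]
    [Subsingleton X.V2] : Surjective X.r13 := by
  by_contra hs
  obtain ⟨ξ, hξ, hξ13⟩ := exists_ne_zero_forall_apply_eq_zero hs
  obtain ⟨y, hy⟩ := DFunLike.ne_iff.1 hξ
  have hg : ((0 : X.V1 →ₗ[k] X.V1), (0 : X.V2 →ₗ[k] X.V2), ξ.smulRight y) ∈ homSpace X X :=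
    ⟨by ext; simp [hξ13], by simp, Subsingleton.elim _ _⟩
  have := congrArg (·.2.2) (eq_zero_of_hom_self_eq_one hX hg (Or.inl not_injective_zero))
  exact (smulRight_apply_eq_zero_iff.1 this).elim hξ fun h => hy (by simp [h])

theorem surjective_r123_of_r23_apply_eq_zero {X : RepQ1 k} (hX : X.IsExceptional)
    {v : X.V2} (hv : v ≠ 0) (hv23 : X.r23 v = 0) : Surjective X.r123 := by
  rcases subsingleton_or_nontrivial X.V3 with h3 | h3
  · exact fun y => ⟨0, Subsingleton.elim _ _⟩
  · rw [r123, coe_comp]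
    exact (surjective_r23_of_surjective_phi (ext1_eq_zero_iff.1 hX.2) hv hv23).comp
      (surjective_r12_of_r23_apply_eq_zero hX.1 hv hv23)

theorem surjective_r123_of_r12_apply_eq_zero {X : RepQ1 k} (hX : X.IsExceptional)
    [Nontrivial X.V2] {u : X.V1} (hu : u ≠ 0) (hu12 : X.r12 u = 0) : Surjective X.r123 := by
  rcases subsingleton_or_nontrivial X.V3 with h3 | h3
  · exact fun y => ⟨0, Subsingleton.elim _ _⟩
  · rw [r123, coe_comp]
    exact (surjective_r23_of_r12_apply_eq_zero hX.1 hu12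
      (r13_apply_ne_zero_of_r12_apply_eq_zero hX.1 hu hu12)).comp
      (surjective_r12_of_surjective_phi (ext1_eq_zero_iff.1 hX.2) hu hu12)

theorem finrank_V3_eq_finrank_V1_add_one {Y : RepQ1 k} (hY : Y.IsExceptional)
    (h12 : Injective Y.r12) (h23 : Injective Y.r23) (hs : Surjective Y.r12 ∨ Surjective Y.r23) :
    finrank k Y.V3 = finrank k Y.V1 + 1 := by
  have heuler := euler_form Y Y
  rw [hY.1, hY.2] at heuler
  have h1 := finrank_le_finrank_of_injective h12
  have h2 := finrank_le_finrank_of_injective h23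
  -- with `dim Y₂ ∈ {dim Y₁, dim Y₃}` the Euler form reads `(dim Y₃ - dim Y₁)² = 1`
  rcases hs with hs | hs
  · have := (LinearEquiv.ofBijective _ ⟨h12, hs⟩).finrank_eq
    nlinarith
  · have := (LinearEquiv.ofBijective _ ⟨h23, hs⟩).finrank_eq
    nlinarith

theorem exists_mem_homSpace_of_comp_r123 {Y : RepQ1 k} (h12 : Injective Y.r12)
    (h23 : Injective Y.r23) (hs : Surjective Y.r12 ∨ Surjective Y.r23)
    {g1 : Y.V1 →ₗ[k] Y.V1} {g3 : Y.V3 →ₗ[k] Y.V3} (h13 : g3 ∘ₗ Y.r13 = Y.r13 ∘ₗ g1)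
    (h123 : g3 ∘ₗ Y.r123 = Y.r123 ∘ₗ g1) : ∃ g2, (g1, g2, g3) ∈ homSpace Y Y := by
  -- `hb` is named so that the `LinearEquiv.ofBijective` simp lemmas match syntactically
  rcases hs with hs | hs
  · have hb : Bijective Y.r12 := ⟨h12, hs⟩
    let e := LinearEquiv.ofBijective Y.r12 hb
    refine ⟨Y.r12 ∘ₗ g1 ∘ₗ e.symm.toLinearMap, h13, ?_, ?_⟩
    · ext x
      simp [e]
    · ext y
      obtain ⟨x, rfl⟩ := hs y
      simpa [e] using LinearMap.congr_fun h123 x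
  · have hb : Bijective Y.r23 := ⟨h23, hs⟩
    let e := LinearEquiv.ofBijective Y.r23 hb
    refine ⟨e.symm.toLinearMap ∘ₗ g3 ∘ₗ Y.r23, h13, ?_, ?_⟩
    · ext x
      apply h23
      simpa [e] using LinearMap.congr_fun h123 x
    · ext x
      simp [e]

/-- For `u` in the kernel of `r13 - μ • r123` and `χ ≠ 0` vanishing on its range (which is not
everything, by dimension), `(χ (r123 ·) • u, _, χ (·) • r123 u)` is an endomorphism of `Y` that
is neither zero nor injective. -/
theorem injective_r13_sub_smul_r123 {Y : RepQ1 k} (hY : Y.IsExceptional)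
    (h12 : Injective Y.r12) (h23 : Injective Y.r23) (hs : Surjective Y.r12 ∨ Surjective Y.r23)
    (μ : k) : Injective (Y.r13 - μ • Y.r123) := by
  have hdim := finrank_V3_eq_finrank_V1_add_one hY h12 h23 hs
  rw [injective_iff_map_eq_zero]
  intro u hu0
  by_contra hu
  have : Nontrivial Y.V1 := ⟨u, 0, hu⟩
  have hu13 : Y.r13 u = μ • Y.r123 u := sub_eq_zero.1 hu0
  obtain ⟨χ, hχ, hχ0⟩ := exists_ne_zero_forall_apply_eq_zero (f := Y.r13 - μ • Y.r123) fun he => by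
    have := (Y.r13 - μ • Y.r123).finrank_range_le
    rw [range_eq_top.2 he, finrank_top] at this
    omega
  have hχ13 (x : Y.V1) : χ (Y.r13 x) = μ * χ (Y.r123 x) := by
    simpa [sub_eq_zero] using hχ0 x
  obtain ⟨g2, hg⟩ := exists_mem_homSpace_of_comp_r123 h12 h23 hs
    (g1 := (χ ∘ₗ Y.r123).smulRight u) (g3 := χ.smulRight (Y.r123 u))
    (by ext x; simp [hu13, hχ13, smul_smul, mul_comm]) (by ext x; simp)
  have hχ' : ¬ Injective χ := fun h => by
    have := finrank_le_finrank_of_injective h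
    have := Module.finrank_pos (R := k) (M := Y.V1)
    rw [Module.finrank_self] at *
    omega
  have := congrArg (·.2.2) (eq_zero_of_hom_self_eq_one hY.1 hg
    (Or.inr (Or.inr fun h => hχ' fun a b hab => h (by simp [hab]))))
  exact (smulRight_apply_eq_zero_iff.1 this).elim hχ fun h => hu (h23.comp h12 (by simpa using h))

theorem hom_eq_zero_of_surjective_r123 [IsAlgClosed k] {X Y : RepQ1 k} (hY : Y.IsExceptional)
    (h12 : Injective Y.r12) (h23 : Injective Y.r23) (hs : Surjective Y.r12 ∨ Surjective Y.r23)
    (hX : Surjective X.r123) : hom X Y = 0 := by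
  rw [hom_eq_zero_iff]
  rintro ⟨f1, f2, f3⟩ ⟨hf13, hf12, hf23⟩
  dsimp only at hf13 hf12 hf23
  have hf123 : f3 ∘ₗ X.r123 = Y.r123 ∘ₗ f1 := by
    rw [r123, r123, ← LinearMap.comp_assoc, hf23, LinearMap.comp_assoc, hf12,
      LinearMap.comp_assoc]
  have hrange : (range f1).map Y.r123 = range f3 := by
    rw [← range_comp, ← hf123, range_comp_of_range_eq_top _ (range_eq_top.2 hX)]
  have hf1 : f1 = 0 := by
    refine range_eq_bot.1 (Submodule.eq_bot_of_map_le_map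
      (by rw [r123, coe_comp]; exact h23.comp h12)
      (injective_r13_sub_smul_r123 hY h12 h23 hs) ?_)
    rw [hrange, ← range_comp, ← hf13]
    exact range_comp_le_range _ _
  have hf3 : f3 = 0 := by
    rw [← range_eq_bot, ← hrange, hf1, range_zero, Submodule.map_bot]
  have hf2 : f2 = 0 := by
    rw [hf3, zero_comp] at hf23
    exact ext fun x => h23 (by simpa using (LinearMap.congr_fun hf23 x).symm)
  rw [hf1, hf2, hf3]
  rfl

theorem hom_eq_zero_of_subsingleton_V2 {X Y : RepQ1 k} (hX : hom X X = 1) [Nontrivial X.V1]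
    [Subsingleton X.V2] (h12 : Injective Y.r12) : hom X Y = 0 := by
  rw [hom_eq_zero_iff]
  rintro ⟨f1, f2, f3⟩ ⟨hf13, hf12, -⟩
  rw [Subsingleton.elim f2 0, zero_comp] at hf12
  have hf1 : f1 = 0 := ext fun x => h12 (by simpa using (LinearMap.congr_fun hf12 x).symm)
  rw [hf1, comp_zero] at hf13
  have hf3 : f3 = 0 := ext fun y => by
    obtain ⟨x, rfl⟩ := surjective_r13_of_subsingleton_V2 hX y
    exact LinearMap.congr_fun hf13 x
  rw [hf1, Subsingleton.elim f2 0, hf3]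
  rfl

end RepQ1

/-- `Rep_k(Q1)` has RP property 1 and RP property 2 with respect to
its unique Ext-nontrivial couple `{M, M'}`. -/
theorem statement_10 (k : Type u) [Field k] [IsAlgClosed k] :
    (∀ X : RepQ1 k, X.IsExceptional →
      ((RepQ1.hom (Mrep k) X = 0 ∧ RepQ1.ext1 (Mrep k) X = 0) →
        RepQ1.hom X (Mprep k) = 0 ∧ RepQ1.ext1 X (Mprep k) = 0) ∧
      ((RepQ1.hom (Mprep k) X = 0 ∧ RepQ1.ext1 (Mprep k) X = 0) →
        RepQ1.hom X (Mrep k) = 0 ∧ RepQ1.ext1 X (Mrep k) = 0)) ∧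
    (∀ X Y : RepQ1 k, X.IsExceptional → Y.IsExceptional →
      ((RepQ1.hom (Mrep k) X ≠ 0 ∧ RepQ1.hom X Y ≠ 0 ∧
          RepQ1.hom (Mrep k) Y = 0 ∧ RepQ1.ext1 (Mrep k) Y = 0) →
        RepQ1.hom (Mprep k) Y ≠ 0) ∧
      ((RepQ1.hom (Mprep k) X ≠ 0 ∧ RepQ1.hom X Y ≠ 0 ∧
          RepQ1.hom (Mprep k) Y = 0 ∧ RepQ1.ext1 (Mprep k) Y = 0) →
        RepQ1.hom (Mrep k) Y ≠ 0)) := by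
  refine ⟨fun X _ => ⟨fun ⟨hMX, eMX⟩ => ?_, fun ⟨hM'X, eM'X⟩ => ?_⟩, fun X Y hX hY => ⟨?_, ?_⟩⟩
  · exact ⟨RepQ1.hom_Mprep_eq_zero_of_surjective (RepQ1.surjective_r23_of_ext1_Mrep_eq_zero eMX),
      RepQ1.ext1_Mprep_eq_zero_of_injective ((RepQ1.hom_Mrep_eq_zero_iff X).1 hMX)⟩
  · exact ⟨RepQ1.hom_Mrep_eq_zero_of_surjective (RepQ1.surjective_r12_of_ext1_Mprep_eq_zero eM'X),
      RepQ1.ext1_Mrep_eq_zero_of_injective ((RepQ1.hom_Mprep_eq_zero_iff X).1 hM'X)⟩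
  · rintro ⟨hMX, hXY, hMY, eMY⟩ hM'Y
    obtain ⟨v, hv23, hv⟩ : ∃ v, X.r23 v = 0 ∧ v ≠ 0 := by
      simpa [injective_iff_map_eq_zero] using mt (RepQ1.hom_Mrep_eq_zero_iff X).2 hMX
    exact hXY (RepQ1.hom_eq_zero_of_surjective_r123 hY ((RepQ1.hom_Mprep_eq_zero_iff Y).1 hM'Y)
      ((RepQ1.hom_Mrep_eq_zero_iff Y).1 hMY) (.inr (RepQ1.surjective_r23_of_ext1_Mrep_eq_zero eMY))
      (RepQ1.surjective_r123_of_r23_apply_eq_zero hX hv hv23))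
  · rintro ⟨hM'X, hXY, hM'Y, eM'Y⟩ hMY
    obtain ⟨u, hu12, hu⟩ : ∃ u, X.r12 u = 0 ∧ u ≠ 0 := by
      simpa [injective_iff_map_eq_zero] using mt (RepQ1.hom_Mprep_eq_zero_iff X).2 hM'X
    have hY12 := (RepQ1.hom_Mprep_eq_zero_iff Y).1 hM'Y
    rcases subsingleton_or_nontrivial X.V2 with hX2 | hX2
    · have : Nontrivial X.V1 := ⟨u, 0, hu⟩
      exact hXY (RepQ1.hom_eq_zero_of_subsingleton_V2 hX.1 hY12)
    · exact hXY (RepQ1.hom_eq_zero_of_surjective_r123 hY hY12 ((RepQ1.hom_Mrep_eq_zero_iff Y).1 hMY)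
        (.inl (RepQ1.surjective_r12_of_ext1_Mprep_eq_zero eM'Y))
        (RepQ1.surjective_r123_of_r12_apply_eq_zero hX hu hu12))
end
end

section
/- For every exceptional representation X of the quiver Q1: at least one of hom(M,X), ext1(M,X), hom(M',X), ext1(M',X) is nonzero, and at least one of hom(X,M), ext1(X,M), hom(X,M'), ext1(X,M') is nonzero. (This is the 'additional RP property' for the Ext-nontrivial couple {M, M'} of Rep_k(Q1).) -/
noncomputable section

open Module

universe u

variable (k : Type u) [Field k]

/-
`homSpace ρ ρ'` is the kernel of `Φ` and `ext1 ρ ρ'` the dimension of its cokernel, so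
`hom ρ ρ' - ext1 ρ ρ'` depends only on the dimension vectors: it is the Euler form
`⟨d, d'⟩ = Σᵢ dᵢ d'ᵢ - Σ_{i → j} dᵢ d'ⱼ`, and `⟨d, d⟩ = ½ ((a-b)² + (b-c)² + (a-c)²)` for
`d = (a, b, c)`. An exceptional `X` has `⟨dim X, dim X⟩ = 1`, whereas vanishing of `hom` and `ext1`
between `X` and both `M` and `M'` (on either side) forces `a = b = c`, hence `⟨dim X, dim X⟩ = 0`.
-/

namespace RepQ1

variable {k : Type u} [Field k]

def dimVec (ρ : RepQ1 k) : ℤ × ℤ × ℤ :=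
  (finrank k ρ.V1, finrank k ρ.V2, finrank k ρ.V3)

def eulerForm (d d' : ℤ × ℤ × ℤ) : ℤ :=
  d.1 * d'.1 + d.2.1 * d'.2.1 + d.2.2 * d'.2.2 - d.1 * d'.2.2 - d.1 * d'.2.1 - d.2.1 * d'.2.2

theorem homSpace_eq_ker_phi (ρ ρ' : RepQ1 k) : homSpace ρ ρ' = LinearMap.ker (phi ρ ρ') := by
  ext f
  simp [homSpace, phi, Prod.ext_iff, sub_eq_zero]

theorem hom_sub_ext1 (ρ ρ' : RepQ1 k) :
    (hom ρ ρ' : ℤ) - ext1 ρ ρ' = eulerForm ρ.dimVec ρ'.dimVec := by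
  have rank_nullity := LinearMap.finrank_range_add_finrank_ker (phi ρ ρ')
  have cokernel := Submodule.finrank_quotient_add_finrank (LinearMap.range (phi ρ ρ'))
  simp only [finrank_prod, finrank_linearMap] at rank_nullity cokernel
  rw [hom, ext1, homSpace_eq_ker_phi, dimVec, dimVec, eulerForm]
  zify at rank_nullity cokernel
  linear_combination rank_nullity - cokernel

theorem eulerForm_eq_zero_of_hom_eq_zero_of_ext1_eq_zero {ρ ρ' : RepQ1 k}
    (hhom : hom ρ ρ' = 0) (hext : ext1 ρ ρ' = 0) : eulerForm ρ.dimVec ρ'.dimVec = 0 := by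
  rw [← hom_sub_ext1, hhom, hext]
  rfl

theorem IsExceptional.eulerForm_dimVec_self {X : RepQ1 k} (hX : X.IsExceptional) :
    eulerForm X.dimVec X.dimVec = 1 := by
  rw [← hom_sub_ext1, hX.1, hX.2]
  rfl

theorem dimVec_Mrep : (Mrep k).dimVec = (0, 1, 0) := by
  simp only [dimVec, Mrep, Prod.mk.injEq]
  refine ⟨?_, ?_, ?_⟩ <;> exact_mod_cast finrank_fin_fun k

theorem dimVec_Mprep : (Mprep k).dimVec = (1, 0, 1) := by
  simp only [dimVec, Mprep, Prod.mk.injEq]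
  refine ⟨?_, ?_, ?_⟩ <;> exact_mod_cast finrank_fin_fun k

theorem eulerForm_self_eq_zero_of_eulerForm_left_eq_zero (d : ℤ × ℤ × ℤ)
    (hM : eulerForm (0, 1, 0) d = 0) (hM' : eulerForm (1, 0, 1) d = 0) :
    eulerForm d d = 0 := by
  obtain ⟨a, b, c⟩ := d
  simp only [eulerForm] at hM hM' ⊢
  linear_combination (a - c) * hM' + (b - c) * hM

theorem eulerForm_self_eq_zero_of_eulerForm_right_eq_zero (d : ℤ × ℤ × ℤ)
    (hM : eulerForm d (0, 1, 0) = 0) (hM' : eulerForm d (1, 0, 1) = 0) :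
    eulerForm d d = 0 := by
  obtain ⟨a, b, c⟩ := d
  simp only [eulerForm] at hM hM' ⊢
  linear_combination (c - a) * hM + (c - b) * hM'

end RepQ1

theorem statement_11_general (k : Type u) [Field k] (X : RepQ1 k)
    (hX : X.IsExceptional) :
    (RepQ1.hom (Mrep k) X ≠ 0 ∨ RepQ1.ext1 (Mrep k) X ≠ 0 ∨
      RepQ1.hom (Mprep k) X ≠ 0 ∨ RepQ1.ext1 (Mprep k) X ≠ 0) ∧
    (RepQ1.hom X (Mrep k) ≠ 0 ∨ RepQ1.ext1 X (Mrep k) ≠ 0 ∨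
      RepQ1.hom X (Mprep k) ≠ 0 ∨ RepQ1.ext1 X (Mprep k) ≠ 0) := by
  have hq := hX.eulerForm_dimVec_self
  constructor
  · by_contra! ⟨hhomM, hextM, hhomM', hextM'⟩
    have hM := RepQ1.eulerForm_eq_zero_of_hom_eq_zero_of_ext1_eq_zero hhomM hextM
    have hM' := RepQ1.eulerForm_eq_zero_of_hom_eq_zero_of_ext1_eq_zero hhomM' hextM'
    rw [RepQ1.dimVec_Mrep] at hM
    rw [RepQ1.dimVec_Mprep] at hM'
    rw [RepQ1.eulerForm_self_eq_zero_of_eulerForm_left_eq_zero _ hM hM'] at hq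
    exact zero_ne_one hq
  · by_contra! ⟨hhomM, hextM, hhomM', hextM'⟩
    have hM := RepQ1.eulerForm_eq_zero_of_hom_eq_zero_of_ext1_eq_zero hhomM hextM
    have hM' := RepQ1.eulerForm_eq_zero_of_hom_eq_zero_of_ext1_eq_zero hhomM' hextM'
    rw [RepQ1.dimVec_Mrep] at hM
    rw [RepQ1.dimVec_Mprep] at hM'
    rw [RepQ1.eulerForm_self_eq_zero_of_eulerForm_right_eq_zero _ hM hM'] at hq
    exact zero_ne_one hq

/-- The additional RP property for the Ext-nontrivial couple `{M, M'}` of `Rep_k(Q1)`. -/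
theorem statement_11 (k : Type u) [Field k] [IsAlgClosed k] (X : RepQ1 k)
    (hX : X.IsExceptional) :
    (RepQ1.hom (Mrep k) X ≠ 0 ∨ RepQ1.ext1 (Mrep k) X ≠ 0 ∨
      RepQ1.hom (Mprep k) X ≠ 0 ∨ RepQ1.ext1 (Mprep k) X ≠ 0) ∧
    (RepQ1.hom X (Mrep k) ≠ 0 ∨ RepQ1.ext1 X (Mrep k) ≠ 0 ∨
      RepQ1.hom X (Mprep k) ≠ 0 ∨ RepQ1.ext1 X (Mprep k) ≠ 0) :=
  statement_11_general k X hX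
end
end

section
/- For every natural number m ≥ 1, there is no exceptional representation ρ of the quiver Q1 whose dimension vector (dim V_1, dim V_2, dim V_3) equals (m+1, m, m+1) or (m, m+1, m). -/
noncomputable section

open Module

universe u

variable (k : Type u) [Field k]

/-!
An exceptional representation has `End ρ = k`, so each of its nonzero endomorphisms is
invertible. When the middle space is smaller, or larger, than both outer ones, rank counting
yields a nonzero endomorphism that vanishes at a nonzero vertex. For `(m, m+1, m)` it is
`ρ ↠ S₂ ↪ ρ` through the simple representation at vertex 2, which is a quotient because `ρ₁₂`
is not onto and a subrepresentation because `ρ₂₃` is not injective. For `(m+1, m, m+1)` take a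
functional `ψ ≠ 0` on `V₃` killing the image of `ρ₂₃`: it factors through `ρ ↠ S₃ ↪ ρ` if
`ψ ∘ ρ₁₃ = 0`, and otherwise through `ρ → (k, 0, k) → ρ`, using a nonzero vector of `ker ρ₁₂`.
-/

section LinearAlgebra

variable {k U V W : Type*} [Field k] [AddCommGroup U] [AddCommGroup V] [AddCommGroup W]
  [Module k U] [Module k V] [Module k W]

lemma LinearMap.smulRight_comp (φ : V →ₗ[k] k) (w : W) (g : U →ₗ[k] V) :
    φ.smulRight w ∘ₗ g = (φ ∘ₗ g).smulRight w := rfl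

lemma LinearMap.comp_smulRight (g : W →ₗ[k] U) (φ : V →ₗ[k] k) (w : W) :
    g ∘ₗ φ.smulRight w = φ.smulRight (g w) := by
  ext; simp

variable [FiniteDimensional k V] [FiniteDimensional k W]

lemma LinearMap.exists_ne_zero_apply_eq_zero_of_finrank_lt {f : V →ₗ[k] W}
    (h : finrank k W < finrank k V) : ∃ v, v ≠ 0 ∧ f v = 0 := by
  obtain ⟨v, hv, hv0⟩ := Submodule.exists_mem_ne_zero_of_ne_bot (ker_ne_bot_of_finrank_lt h)
  exact ⟨v, hv0, hv⟩

lemma LinearMap.exists_dual_ne_zero_comp_eq_zero_of_finrank_lt {f : W →ₗ[k] V}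
    (h : finrank k W < finrank k V) : ∃ ψ : Module.Dual k V, ψ ≠ 0 ∧ ψ ∘ₗ f = 0 :=
  f.dualMap.exists_ne_zero_apply_eq_zero_of_finrank_lt <| by
    rwa [Subspace.dual_finrank_eq, Subspace.dual_finrank_eq]

end LinearAlgebra

namespace RepQ1

variable {k : Type u} [Field k] {ρ : RepQ1 k}

lemma one_mem_homSpace_s15 (ρ : RepQ1 k) : 1 ∈ homSpace ρ ρ :=
  ⟨rfl, rfl, rfl⟩

lemma exists_smul_one_eq_of_hom_self_eq_one (h : hom ρ ρ = 1) {f}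
    (hf : f ∈ homSpace ρ ρ) : ∃ c : k, c • 1 = f := by
  have hone : (⟨1, one_mem_homSpace_s15 ρ⟩ : homSpace ρ ρ) ≠ 0 := by
    intro h0
    have : Subsingleton ((ρ.V1 →ₗ[k] ρ.V1) × (ρ.V2 →ₗ[k] ρ.V2) × (ρ.V3 →ₗ[k] ρ.V3)) :=
      subsingleton_of_zero_eq_one (congrArg Subtype.val h0).symm
    simp [hom, finrank_zero_of_subsingleton] at h
  obtain ⟨c, hc⟩ := (finrank_eq_one_iff_of_nonzero' _ hone).mp h ⟨f, hf⟩
  exact ⟨c, congrArg Subtype.val hc⟩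

lemma isUnit_of_hom_self_eq_one (h : hom ρ ρ = 1) {f} (hf : f ∈ homSpace ρ ρ)
    (hf0 : f ≠ 0) : IsUnit f := by
  obtain ⟨c, rfl⟩ := exists_smul_one_eq_of_hom_self_eq_one h hf
  have hc : c ≠ 0 := by rintro rfl; exact hf0 (zero_smul k 1)
  exact ⟨⟨c • 1, c⁻¹ • 1, by simp [smul_smul, hc], by simp [smul_smul, hc]⟩, rfl⟩

theorem hom_self_ne_one_of_finrank_V2_lt (h21 : finrank k ρ.V2 < finrank k ρ.V1)
    (h23 : finrank k ρ.V2 < finrank k ρ.V3) (h2 : 0 < finrank k ρ.V2) : hom ρ ρ ≠ 1 := by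
  have : Nontrivial ρ.V2 := Module.nontrivial_of_finrank_pos h2
  suffices ∃ f ∈ homSpace ρ ρ, f ≠ 0 ∧ f.2.1 = 0 by
    obtain ⟨f, hf, hf0, hf2⟩ := this
    intro h
    have hu := Prod.isUnit_iff.mp (Prod.isUnit_iff.mp (isUnit_of_hom_self_eq_one h hf hf0)).2
    exact not_isUnit_zero (hf2 ▸ hu.1)
  obtain ⟨ψ, hψ, hψr⟩ := ρ.r23.exists_dual_ne_zero_comp_eq_zero_of_finrank_lt h23
  by_cases hψ1 : ψ ∘ₗ ρ.r13 = 0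
  · have : Nontrivial ρ.V3 := Module.nontrivial_of_finrank_pos (h2.trans h23)
    obtain ⟨w, hw⟩ := exists_ne (0 : ρ.V3)
    refine ⟨(0, 0, ψ.smulRight w), ⟨?_, ?_, ?_⟩, ?_, rfl⟩ <;>
      simp [LinearMap.smulRight_comp, LinearMap.smulRight_apply_eq_zero_iff, hψr, hψ1, hψ, hw]
  · obtain ⟨v, hv, hrv⟩ := ρ.r12.exists_ne_zero_apply_eq_zero_of_finrank_lt h21
    refine ⟨((ψ ∘ₗ ρ.r13).smulRight v, 0, ψ.smulRight (ρ.r13 v)), ⟨?_, ?_, ?_⟩, ?_, rfl⟩ <;>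
      simp [LinearMap.smulRight_comp, LinearMap.comp_smulRight,
        LinearMap.smulRight_apply_eq_zero_iff, hψr, hrv, hψ1, hv]

theorem hom_self_ne_one_of_lt_finrank_V2 (h12 : finrank k ρ.V1 < finrank k ρ.V2)
    (h32 : finrank k ρ.V3 < finrank k ρ.V2) (h1 : 0 < finrank k ρ.V1) : hom ρ ρ ≠ 1 := by
  have : Nontrivial ρ.V1 := Module.nontrivial_of_finrank_pos h1
  obtain ⟨φ, hφ, hφr⟩ := ρ.r12.exists_dual_ne_zero_comp_eq_zero_of_finrank_lt h12
  obtain ⟨v, hv, hrv⟩ := ρ.r23.exists_ne_zero_apply_eq_zero_of_finrank_lt h32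
  have hf : ((0 : ρ.V1 →ₗ[k] ρ.V1), φ.smulRight v, (0 : ρ.V3 →ₗ[k] ρ.V3)) ∈ homSpace ρ ρ := by
    refine ⟨?_, ?_, ?_⟩ <;> simp [LinearMap.smulRight_comp, LinearMap.comp_smulRight, hφr, hrv]
  have hf0 : ((0 : ρ.V1 →ₗ[k] ρ.V1), φ.smulRight v, (0 : ρ.V3 →ₗ[k] ρ.V3)) ≠ 0 := by
    simp [LinearMap.smulRight_apply_eq_zero_iff, hφ, hv]
  intro h
  exact not_isUnit_zero (Prod.isUnit_iff.mp (isUnit_of_hom_self_eq_one h hf hf0)).1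

end RepQ1

theorem statement_15_general (k : Type u) [Field k] (m : ℕ) (hm : 1 ≤ m)
    (ρ : RepQ1 k) (hρ : ρ.IsExceptional) :
    ¬((finrank k ρ.V1 = m + 1 ∧ finrank k ρ.V2 = m ∧ finrank k ρ.V3 = m + 1) ∨
      (finrank k ρ.V1 = m ∧ finrank k ρ.V2 = m + 1 ∧ finrank k ρ.V3 = m)) := by
  rintro (⟨h1, h2, h3⟩ | ⟨h1, h2, h3⟩)
  · exact RepQ1.hom_self_ne_one_of_finrank_V2_lt (by omega) (by omega) (by omega) hρ.1
  · exact RepQ1.hom_self_ne_one_of_lt_finrank_V2 (by omega) (by omega) (by omega) hρ.1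

/-- For `m ≥ 1`, no exceptional representation of `Q1` has dimension vector
`(m+1, m, m+1)` or `(m, m+1, m)`. -/
theorem statement_15 (k : Type u) [Field k] [IsAlgClosed k] (m : ℕ) (hm : 1 ≤ m)
    (ρ : RepQ1 k) (hρ : ρ.IsExceptional) :
    ¬((finrank k ρ.V1 = m + 1 ∧ finrank k ρ.V2 = m ∧ finrank k ρ.V3 = m + 1) ∨
      (finrank k ρ.V1 = m ∧ finrank k ρ.V2 = m + 1 ∧ finrank k ρ.V3 = m)) :=
  statement_15_general k m hm ρ hρ
end
end

section
/- Let 0 → A → C → B → 0 be a short exact sequence of representations of the quiver Q1 with A ≠ 0 and B ≠ 0. Then: if C ≅ E_2^0 then A ≅ E_3^0 and B ≅ M; if C ≅ E_4^0 then A ≅ M and B ≅ E_1^0; and if C ≅ M' then A ≅ E_3^0 and B ≅ E_1^0. -/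
noncomputable section

open Module

universe u

variable (k : Type u) [Field k]

/-!
Dimension vectors are additive in short exact sequences, and `C` has total dimension two, so the
nonzero outer terms `A` and `B` each have total dimension one. The structure map of `C` between its
two nonzero vertices is injective and restricts to the subrepresentation `A`, so `A` cannot sit at
its source: `A` lives at the target vertex and `B` at the source vertex. A representation
concentrated at one vertex has only zero structure maps, so it is determined by its dimension vector.
-/

section LinearAlgebra

variable {k : Type u} [Field k] {U V W X : Type u}
  [AddCommGroup U] [Module k U] [AddCommGroup V] [Module k V]
  [AddCommGroup W] [Module k W] [AddCommGroup X] [Module k X]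

lemma LinearMap.eq_of_finrank_eq_zero [FiniteDimensional k U] [FiniteDimensional k V]
    (h : finrank k U = 0 ∨ finrank k V = 0) (a b : U →ₗ[k] V) : a = b := by
  rcases h with h | h
  · have := finrank_zero_iff.mp h
    exact Subsingleton.elim a b
  · have := finrank_zero_iff.mp h
    exact Subsingleton.elim a b

lemma LinearMap.finrank_add_finrank_eq_of_range_eq_ker [FiniteDimensional k U]
    [FiniteDimensional k V] (f : U →ₗ[k] V) (g : V →ₗ[k] W)
    (hf : Function.Injective f) (hg : Function.Surjective g) (h : range f = ker g) :
    finrank k U + finrank k W = finrank k V := by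
  rw [← finrank_range_add_finrank_ker g, range_eq_top.mpr hg, finrank_top, ← h,
    finrank_range_of_inj hf, add_comm]

lemma LinearMap.injective_of_comp_eq_comp {r : U →ₗ[k] W} {r' : V →ₗ[k] X}
    {f : U →ₗ[k] V} {g : W →ₗ[k] X} (comm : g ∘ₗ r = r' ∘ₗ f)
    (hf : Function.Injective f) (hr' : Function.Injective r') : Function.Injective r := by
  have : Function.Injective (g ∘ₗ r) := by
    rw [comm]
    exact hr'.comp hf
  exact Function.Injective.of_comp this

end LinearAlgebra

namespace RepQ1

variable {k : Type u} [Field k]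

lemma isZeroRep_iff_finrank (ρ : RepQ1 k) :
    ρ.IsZeroRep ↔ finrank k ρ.V1 = 0 ∧ finrank k ρ.V2 = 0 ∧ finrank k ρ.V3 = 0 := by
  simp only [IsZeroRep, finrank_zero_iff]

lemma Iso.finrank_eq {ρ ρ' : RepQ1 k} (h : Iso ρ ρ') :
    finrank k ρ.V1 = finrank k ρ'.V1 ∧ finrank k ρ.V2 = finrank k ρ'.V2 ∧
      finrank k ρ.V3 = finrank k ρ'.V3 :=
  let ⟨e1, e2, e3, _⟩ := h
  ⟨e1.finrank_eq, e2.finrank_eq, e3.finrank_eq⟩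

/-- Every arrow of a representation concentrated at one vertex has a zero end. -/
lemma iso_of_finrank_eq {ρ ρ' : RepQ1 k}
    (hρ : finrank k ρ.V1 + finrank k ρ.V2 + finrank k ρ.V3 ≤ 1)
    (h1 : finrank k ρ.V1 = finrank k ρ'.V1) (h2 : finrank k ρ.V2 = finrank k ρ'.V2)
    (h3 : finrank k ρ.V3 = finrank k ρ'.V3) : Iso ρ ρ' :=
  ⟨.ofFinrankEq _ _ h1, .ofFinrankEq _ _ h2, .ofFinrankEq _ _ h3,
    LinearMap.eq_of_finrank_eq_zero (by omega) _ _,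
    LinearMap.eq_of_finrank_eq_zero (by omega) _ _,
    LinearMap.eq_of_finrank_eq_zero (by omega) _ _⟩

section ShortExact

variable {A C B : RepQ1 k} {f : Homo A C} {g : Homo C B}

lemma IsSES.finrank_add (hses : IsSES f g) :
    finrank k A.V1 + finrank k B.V1 = finrank k C.V1 ∧
      finrank k A.V2 + finrank k B.V2 = finrank k C.V2 ∧
      finrank k A.V3 + finrank k B.V3 = finrank k C.V3 := by
  obtain ⟨i1, i2, i3, s1, s2, s3, e1, e2, e3⟩ := hses
  exact ⟨LinearMap.finrank_add_finrank_eq_of_range_eq_ker _ _ i1 s1 e1,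
    LinearMap.finrank_add_finrank_eq_of_range_eq_ker _ _ i2 s2 e2,
    LinearMap.finrank_add_finrank_eq_of_range_eq_ker _ _ i3 s3 e3⟩

end ShortExact

end RepQ1

section Models

variable (m : ℕ)

lemma finrank_E1 : finrank k (E1 k m).V1 = m + 1 ∧ finrank k (E1 k m).V2 = m ∧
    finrank k (E1 k m).V3 = m :=
  ⟨finrank_fin_fun k, finrank_fin_fun k, finrank_fin_fun k⟩

lemma finrank_E2 : finrank k (E2 k m).V1 = m ∧ finrank k (E2 k m).V2 = m + 1 ∧
    finrank k (E2 k m).V3 = m + 1 :=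
  ⟨finrank_fin_fun k, finrank_fin_fun k, finrank_fin_fun k⟩

lemma finrank_E3 : finrank k (E3 k m).V1 = m ∧ finrank k (E3 k m).V2 = m ∧
    finrank k (E3 k m).V3 = m + 1 :=
  ⟨finrank_fin_fun k, finrank_fin_fun k, finrank_fin_fun k⟩

lemma finrank_E4 : finrank k (E4 k m).V1 = m + 1 ∧ finrank k (E4 k m).V2 = m + 1 ∧
    finrank k (E4 k m).V3 = m :=
  ⟨finrank_fin_fun k, finrank_fin_fun k, finrank_fin_fun k⟩

lemma finrank_Mrep : finrank k (Mrep k).V1 = 0 ∧ finrank k (Mrep k).V2 = 1 ∧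
    finrank k (Mrep k).V3 = 0 :=
  ⟨finrank_fin_fun k, finrank_fin_fun k, finrank_fin_fun k⟩

lemma finrank_Mprep : finrank k (Mprep k).V1 = 1 ∧ finrank k (Mprep k).V2 = 0 ∧
    finrank k (Mprep k).V3 = 1 :=
  ⟨finrank_fin_fun k, finrank_fin_fun k, finrank_fin_fun k⟩

end Models

namespace RepQ1.IsSES

open LinearMap

variable {k : Type u} [Field k] {A C B : RepQ1 k} {f : Homo A C} {g : Homo C B}

lemma iso_E3_and_iso_Mrep_of_iso_E2 (hses : IsSES f g) (hA : ¬ A.IsZeroRep)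
    (hB : ¬ B.IsZeroRep) (hC : Iso C (E2 k 0)) : Iso A (E3 k 0) ∧ Iso B (Mrep k) := by
  obtain ⟨c1, c2, c3⟩ := hC.finrank_eq
  obtain ⟨_, e2, _, -, -, c23⟩ := hC
  have hC23 : Function.Injective C.r23 :=
    injective_of_comp_eq_comp c23 e2.injective Function.injective_id
  have hA23 : finrank k A.V2 ≤ finrank k A.V3 :=
    finrank_le_finrank_of_injective (injective_of_comp_eq_comp f.comm23 hses.2.1 hC23)
  rw [isZeroRep_iff_finrank] at hA hB
  obtain ⟨d1, d2, d3⟩ := hses.finrank_add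
  have := finrank_E2 k 0; have := finrank_E3 k 0; have := finrank_Mrep k
  exact ⟨iso_of_finrank_eq (by omega) (by omega) (by omega) (by omega),
    iso_of_finrank_eq (by omega) (by omega) (by omega) (by omega)⟩

lemma iso_Mrep_and_iso_E1_of_iso_E4 (hses : IsSES f g) (hA : ¬ A.IsZeroRep)
    (hB : ¬ B.IsZeroRep) (hC : Iso C (E4 k 0)) : Iso A (Mrep k) ∧ Iso B (E1 k 0) := by
  obtain ⟨c1, c2, c3⟩ := hC.finrank_eq
  obtain ⟨e1, _, _, -, c12, -⟩ := hC
  have hC12 : Function.Injective C.r12 :=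
    injective_of_comp_eq_comp c12 e1.injective Function.injective_id
  have hA12 : finrank k A.V1 ≤ finrank k A.V2 :=
    finrank_le_finrank_of_injective (injective_of_comp_eq_comp f.comm12 hses.1 hC12)
  rw [isZeroRep_iff_finrank] at hA hB
  obtain ⟨d1, d2, d3⟩ := hses.finrank_add
  have := finrank_E4 k 0; have := finrank_Mrep k; have := finrank_E1 k 0
  exact ⟨iso_of_finrank_eq (by omega) (by omega) (by omega) (by omega),
    iso_of_finrank_eq (by omega) (by omega) (by omega) (by omega)⟩

lemma iso_E3_and_iso_E1_of_iso_Mprep (hses : IsSES f g) (hA : ¬ A.IsZeroRep)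
    (hB : ¬ B.IsZeroRep) (hC : Iso C (Mprep k)) : Iso A (E3 k 0) ∧ Iso B (E1 k 0) := by
  obtain ⟨c1, c2, c3⟩ := hC.finrank_eq
  obtain ⟨e1, _, _, c13, -, -⟩ := hC
  have hC13 : Function.Injective C.r13 :=
    injective_of_comp_eq_comp c13 e1.injective Function.injective_id
  have hA13 : finrank k A.V1 ≤ finrank k A.V3 :=
    finrank_le_finrank_of_injective (injective_of_comp_eq_comp f.comm13 hses.1 hC13)
  rw [isZeroRep_iff_finrank] at hA hB
  obtain ⟨d1, d2, d3⟩ := hses.finrank_add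
  have := finrank_Mprep k; have := finrank_E3 k 0; have := finrank_E1 k 0
  exact ⟨iso_of_finrank_eq (by omega) (by omega) (by omega) (by omega),
    iso_of_finrank_eq (by omega) (by omega) (by omega) (by omega)⟩

end RepQ1.IsSES

theorem statement_18_general (k : Type u) [Field k]
    (A C B : RepQ1 k) (f : RepQ1.Homo A C) (g : RepQ1.Homo C B)
    (hses : RepQ1.IsSES f g) (hA : ¬ A.IsZeroRep) (hB : ¬ B.IsZeroRep) :
    (RepQ1.Iso C (E2 k 0) → RepQ1.Iso A (E3 k 0) ∧ RepQ1.Iso B (Mrep k)) ∧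
    (RepQ1.Iso C (E4 k 0) → RepQ1.Iso A (Mrep k) ∧ RepQ1.Iso B (E1 k 0)) ∧
    (RepQ1.Iso C (Mprep k) → RepQ1.Iso A (E3 k 0) ∧ RepQ1.Iso B (E1 k 0)) :=
  ⟨hses.iso_E3_and_iso_Mrep_of_iso_E2 hA hB, hses.iso_Mrep_and_iso_E1_of_iso_E4 hA hB,
    hses.iso_E3_and_iso_E1_of_iso_Mprep hA hB⟩

/-- The short exact sequences in `Rep_k(Q1)` with middle term `E₂⁰`, `E₄⁰` or `M'`
and nonzero outer terms are unique. -/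
theorem statement_18 (k : Type u) [Field k] [IsAlgClosed k]
    (A C B : RepQ1 k) (f : RepQ1.Homo A C) (g : RepQ1.Homo C B)
    (hses : RepQ1.IsSES f g) (hA : ¬ A.IsZeroRep) (hB : ¬ B.IsZeroRep) :
    (RepQ1.Iso C (E2 k 0) → RepQ1.Iso A (E3 k 0) ∧ RepQ1.Iso B (Mrep k)) ∧
    (RepQ1.Iso C (E4 k 0) → RepQ1.Iso A (Mrep k) ∧ RepQ1.Iso B (E1 k 0)) ∧
    (RepQ1.Iso C (Mprep k) → RepQ1.Iso A (E3 k 0) ∧ RepQ1.Iso B (E1 k 0)) :=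
  statement_18_general k A C B f g hses hA hB
end
end
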